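/- Let n be even. In ℂⁿ with standard coordinates w¹,…,wⁿ, flat Kähler form ω, holomorphic volume form Ω = dw¹ ∧ ⋯ ∧ dwⁿ, and the action of the torus T^{n−1} with moment map level sets given by |w²|² − |w¹|² = c₂, …, |wⁿ|² − |w¹|² = c_n, for any real constants c₂, …, c_n and c' the set L = { w ∈ ℂⁿ : |w^j|² − |w¹|² = c_j for j = 2,…,n, and Re(w¹ w² ⋯ wⁿ) = c' } is a special Lagrangian submanifold of ℂⁿ at every point where it is a smooth n-dimensional submanifold, i.e. ω|_L = 0 and Im Ω|_L = 0. If n is odd, the same holds with the last condition replaced by Im(w¹ w² ⋯ wⁿ) = c'. -/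
import Mathlib


/- STATEMENT 19: In ℂⁿ with the flat Kähler form ω and holomorphic volume form
Ω = dw¹ ∧ ⋯ ∧ dwⁿ, for real constants c₂, …, c_n and c', the Harvey–Lawson set
L = { w : |w^j|² − |w¹|² = c_j (j = 2,…,n), Re(w¹ w² ⋯ wⁿ) = c' }   (n even)
(resp. with Im(w¹ w² ⋯ wⁿ) = c' for n odd) is a special Lagrangian submanifold of ℂⁿ
at every point where it is a smooth n-dimensional submanifold: ω|_L = 0 and
Im Ω|_L = 0. -/

open Finset Matrix Complex

noncomputable section

lemma Ipow_even {k : ℕ} (h : Even k) : Complex.I ^ k = ((-1 : ℝ) ^ (k / 2) : ℝ) := by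
  obtain ⟨r, rfl⟩ := h
  have h2 : r + r = 2 * r := by ring
  rw [h2, pow_mul, Complex.I_sq]
  have h3 : 2 * r / 2 = r := by omega
  rw [h3]; push_cast; ring


lemma detzero {k : ℕ} (A : Matrix (Fin k) (Fin k) ℝ) (l : Fin k → ℝ) (hl : l ≠ 0)
    (h : ∀ i, ∑ j, A i j * l j = 0) : A.det = 0 := by
  by_contra hd
  exact hl (Matrix.eq_zero_of_mulVec_eq_zero hd (funext h))

lemma lemB {k : ℕ} (A : Matrix (Fin (k+1)) (Fin (k+1)) ℝ) :
    (Matrix.of fun i j => if j = 0 then ((A i 0 : ℝ) : ℂ)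
        else (A i 0 : ℂ) + Complex.I * A i j).det
      = Complex.I ^ k * (A.det : ℂ) := by
  classical
  set U : Matrix (Fin (k+1)) (Fin (k+1)) ℂ :=
    Matrix.of fun r j => (if r = 0 then (1:ℂ) else 0) +
      (if r = j ∧ r ≠ 0 then Complex.I else 0) with hU
  have hmul : (A.map (fun x : ℝ => (x : ℂ))) * U
      = Matrix.of fun i j => if j = 0 then ((A i 0 : ℝ) : ℂ)
        else (A i 0 : ℂ) + Complex.I * A i j := by
    ext i j
    simp only [Matrix.mul_apply, Matrix.map_apply, Matrix.of_apply, hU, mul_add]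
    rw [Finset.sum_add_distrib]
    have h1 : (∑ r, ((A i r : ℂ)) * (if r = 0 then (1:ℂ) else 0)) = (A i 0 : ℂ) := by
      rw [Finset.sum_eq_single 0] <;> simp +contextual
    have h2 : (∑ r, ((A i r : ℂ)) * (if r = j ∧ r ≠ 0 then Complex.I else 0))
        = if j = 0 then 0 else Complex.I * A i j := by
      by_cases hj : j = 0
      · subst hj; simp
      · rw [Finset.sum_eq_single j]
        · simp [hj, mul_comm]
        · intro b _ hb; simp [hb]
        · simp
    rw [h1, h2]
    by_cases hj : j = 0 <;> simp [hj]
  have hdU : U.det = Complex.I ^ k := by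
    have htri : U.BlockTriangular id := by
      intro a b hab
      have ha : a ≠ 0 := fun h0 => by
        rw [h0] at hab; exact absurd hab (Fin.not_lt_zero b)
      have hab' : ¬ (a = b) := fun h0 => by rw [h0] at hab; exact lt_irrefl _ hab
      simp [hU, ha, hab']
    rw [Matrix.det_of_upperTriangular htri]
    rw [Fin.prod_univ_succ]
    simp [hU, Fin.succ_ne_zero]
  have hdm : (A.map (fun x : ℝ => (x : ℂ))).det = (A.det : ℂ) :=
    (Complex.ofRealHom.map_det A).symm
  rw [← hmul, Matrix.det_mul, hdm, hdU]; ring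

lemma lemC {k : ℕ} (W : Fin k → Fin (k+1) → ℝ) :
    (Matrix.of fun (i j : Fin k) => ((W i 0 : ℝ) : ℂ) + Complex.I * W i j.succ).det
      = Complex.I ^ k *
        (((Matrix.of (Fin.cons (Fin.cons 1 fun _ => 0) W)).det : ℂ)
          + Complex.I * ((Matrix.of (Fin.cons (Fin.cons 0 fun _ => 1) W)).det : ℂ)) := by
  classical
  -- real matrices with parameterized first row
  set An : ℝ → ℝ → Matrix (Fin (k+1)) (Fin (k+1)) ℝ :=
    fun x y => Matrix.of (Fin.cons (Fin.cons x fun _ => y) W) with hAn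
  -- complex transformed matrices
  set T : ℝ → ℝ → Matrix (Fin (k+1)) (Fin (k+1)) ℂ :=
    fun x y => Matrix.of fun i j => if j = 0 then (((An x y) i 0 : ℝ) : ℂ)
        else ((An x y) i 0 : ℂ) + Complex.I * (An x y) i j with hT
  have hTdet : ∀ x y, (T x y).det = Complex.I ^ k * ((An x y).det : ℂ) :=
    fun x y => lemB (An x y)
  -- T x y = updateRow (T 0 0) 0 (f x y)
  set f : ℂ → ℂ → (Fin (k+1) → ℂ) :=
    fun x y => fun j => if j = 0 then x else x + Complex.I * y with hf
  have hrow : ∀ x y : ℝ, T x y = (T 0 0).updateRow 0 (f x y) := by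
    intro x y
    ext i j
    refine Fin.cases ?_ ?_ i
    · rw [Matrix.updateRow_self]
      simp only [hT, hf, Matrix.of_apply, hAn, Fin.cons_zero]
      by_cases hj : j = 0
      · subst hj; simp
      · obtain ⟨j', rfl⟩ := Fin.eq_succ_of_ne_zero hj
        simp [Fin.cons_succ, Fin.succ_ne_zero]
    · intro i'
      rw [Matrix.updateRow_ne (Fin.succ_ne_zero i')]
      simp only [hT, Matrix.of_apply, hAn, Fin.cons_succ]
  have hrow10 : T 1 0 = (T 0 0).updateRow 0 (f 1 0) := by simpa using hrow 1 0
  have hrow01 : T 0 1 = (T 0 0).updateRow 0 (f 0 1) := by simpa using hrow 0 1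
  -- Laplace: det of updateRow with e0 equals the k x k matrix det
  have hlap : ((T 0 0).updateRow 0 (fun j => if j = 0 then (1:ℂ) else 0)).det
      = (Matrix.of fun (i j : Fin k) => ((W i 0 : ℝ) : ℂ) + Complex.I * W i j.succ).det := by
    rw [Matrix.det_succ_row_zero]
    rw [Finset.sum_eq_single 0]
    · simp only [Matrix.updateRow_self, if_pos rfl]
      rw [Fin.succAbove_zero]
      have : ((T 0 0).updateRow 0 fun j => if j = 0 then (1:ℂ) else 0).submatrix
          Fin.succ Fin.succ
          = Matrix.of fun (i j : Fin k) => ((W i 0 : ℝ) : ℂ) + Complex.I * W i j.succ := by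
        ext i j
        rw [Matrix.submatrix_apply, Matrix.updateRow_ne (Fin.succ_ne_zero i)]
        simp [hT, hAn, Fin.cons_succ, Fin.succ_ne_zero]
      rw [this]
      simp
    · intro b _ hb
      rw [Matrix.updateRow_self]
      simp [hb]
    · simp
  -- e0 = f 1 0 + I • f 0 1
  have he : (fun j => if j = 0 then (1:ℂ) else 0) = f 1 0 + Complex.I • f 0 1 := by
    funext j
    by_cases hj : j = 0 <;> simp [hf, hj, Complex.I_mul_I]
  have hX : An 1 0 = Matrix.of (Fin.cons (Fin.cons 1 fun _ => 0) W) := rfl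
  have hY : An 0 1 = Matrix.of (Fin.cons (Fin.cons 0 fun _ => 1) W) := rfl
  calc (Matrix.of fun (i j : Fin k) => ((W i 0 : ℝ) : ℂ) + Complex.I * W i j.succ).det
      = ((T 0 0).updateRow 0 (fun j => if j = 0 then (1:ℂ) else 0)).det := hlap.symm
    _ = ((T 0 0).updateRow 0 (f 1 0 + Complex.I • f 0 1)).det := by rw [he]
    _ = ((T 0 0).updateRow 0 (f 1 0)).det
        + Complex.I * ((T 0 0).updateRow 0 (f 0 1)).det := by
        rw [Matrix.det_updateRow_add, Matrix.det_updateRow_smul]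
    _ = (T 1 0).det + Complex.I * (T 0 1).det := by rw [hrow10, hrow01]
    _ = _ := by rw [hTdet 1 0, hTdet 0 1, hX, hY]; ring


/-- The flat Kähler form `ω = (√−1/2) Σ dw^j ∧ dw̄^j` of `ℂⁿ`, evaluated on two
real tangent vectors `u, v ∈ ℂⁿ`. -/
def flatKaehlerForm {n : ℕ} (u v : Fin n → ℂ) : ℝ :=
  ∑ j, ((starRingEnd ℂ) (u j) * v j).im

/-- The holomorphic volume form `Ω = dw¹ ∧ ⋯ ∧ dwⁿ` of `ℂⁿ`, evaluated on `n`
tangent vectors `v 0, …, v (n−1) ∈ ℂⁿ`. -/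
def stdHolVolumeForm {n : ℕ} (v : Fin n → Fin n → ℂ) : ℂ :=
  Matrix.det (Matrix.of fun i j => v i j)

/-- The tangency conditions at `z` for the Harvey–Lawson set
`L = { z : |z^j|² − |z⁰|² = c_j, Re(z⁰ ⋯ z^{n−1}) = c' }` (with `Re` replaced by
`Im` when `n` is odd): `v` is annihilated by the differentials of all the defining
functions of `L`.  (At a point where `L` is a smooth `n`-dimensional submanifold
these vectors form the tangent space `T_z L`.) -/
def hlTangent {n : ℕ} [NeZero n] (z v : Fin n → ℂ) : Prop :=
  (∀ j : Fin n, j ≠ 0 →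
    ((starRingEnd ℂ) (z j) * v j).re = ((starRingEnd ℂ) (z 0) * v 0).re)
  ∧ (if Even n then (∑ k, v k * ∏ j ∈ Finset.univ.erase k, z j).re
      else (∑ k, v k * ∏ j ∈ Finset.univ.erase k, z j).im) = 0

/-- **Theorem (Harvey–Lawson examples).**
Let `n > 0`, and let `c_j` (`j ≠ 0`), `c'` be real constants.  Consider
`L = { z ∈ ℂⁿ : |z^j|² − |z⁰|² = c_j for j ≠ 0, and Re(z⁰ z¹ ⋯ z^{n−1}) = c' }`
for `n` even, the last condition being replaced by `Im(z⁰ z¹ ⋯ z^{n−1}) = c'` for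
`n` odd.  Then at every point `z ∈ L` at which `L` is a smooth `n`-dimensional
submanifold (i.e. where the defining map is a submersion), `L` is special
Lagrangian: the flat Kähler form `ω` vanishes on pairs of tangent vectors of `L`
at `z`, and `Im Ω` vanishes on `n`-tuples of tangent vectors of `L` at `z`. -/
theorem harvey_lawson_special_lagrangian
    {n : ℕ} [NeZero n] (c : Fin n → ℝ) (c' : ℝ) (z : Fin n → ℂ)
    -- `z ∈ L`:
    (hz₁ : ∀ j : Fin n, j ≠ 0 →
      Complex.normSq (z j) - Complex.normSq (z 0) = c j)
    (hz₂ : (if Even n then (∏ j, z j).re else (∏ j, z j).im) = c')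
    -- `L` is a smooth `n`-dimensional submanifold near `z`: the defining map is a
    -- submersion at `z`:
    (hsmooth : Function.Surjective (fun v : Fin n → ℂ =>
      ((fun j : {j : Fin n // j ≠ 0} =>
          ((starRingEnd ℂ) (z j) * v j).re - ((starRingEnd ℂ) (z 0) * v 0).re),
        (if Even n then (∑ k, v k * ∏ j ∈ Finset.univ.erase k, z j).re
          else (∑ k, v k * ∏ j ∈ Finset.univ.erase k, z j).im)))) :
    (∀ u v : Fin n → ℂ, hlTangent z u → hlTangent z v → flatKaehlerForm u v = 0)
    ∧ (∀ V : Fin n → Fin n → ℂ, (∀ i, hlTangent z (V i)) →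
        (stdHolVolumeForm V).im = 0) := by
  classical
  by_cases hall : ∀ j, z j ≠ 0
  case pos =>
    have hn : 0 < n := Nat.pos_of_ne_zero (NeZero.ne n)
    set P := ∏ j, z j with hPdef
    have hP : P ≠ 0 := Finset.prod_ne_zero_iff.mpr (fun j _ => hall j)
    have hr0 : ∀ j, Complex.normSq (z j) ≠ 0 := fun j => Complex.normSq_pos.mpr (hall j) |>.ne'
    have hrpos : ∀ j, 0 < Complex.normSq (z j) := fun j => Complex.normSq_pos.mpr (hall j)
    set S : ℝ := ∑ k, (Complex.normSq (z k))⁻¹ with hS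
    have hSpos : 0 < S :=
      Finset.sum_pos (fun k _ => inv_pos.mpr (hrpos k)) ⟨0, Finset.mem_univ 0⟩
    have key : ∀ v : Fin n → ℂ, hlTangent z v → ∀ j,
        (starRingEnd ℂ) (z j) * v j
          = ((((starRingEnd ℂ) (z 0) * v 0).re : ℝ) : ℂ)
            + ((((starRingEnd ℂ) (z j) * v j).im : ℝ) : ℂ) * Complex.I := by
      intro v hv j
      by_cases hj : j = 0
      · subst hj; exact (Complex.re_add_im _).symm
      · rw [← hv.1 j hj]; exact (Complex.re_add_im _).symm
    have hsum : ∀ v : Fin n → ℂ, hlTangent z v →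
        (∑ k, v k * ∏ j ∈ Finset.univ.erase k, z j)
          = P * (((((starRingEnd ℂ) (z 0) * v 0).re * S : ℝ) : ℂ)
              + (((∑ k, ((starRingEnd ℂ) (z k) * v k).im * (Complex.normSq (z k))⁻¹ : ℝ)) : ℂ)
                * Complex.I) := by
      intro v hv
      have hterm : ∀ k : Fin n, v k * ∏ j ∈ Finset.univ.erase k, z j
          = (((((starRingEnd ℂ) (z 0) * v 0).re : ℝ) : ℂ)
              + ((((starRingEnd ℂ) (z k) * v k).im : ℝ) : ℂ) * Complex.I)
            * P * ((Complex.normSq (z k) : ℝ) : ℂ)⁻¹ := by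
        intro k
        have h2 : z k * ∏ j ∈ Finset.univ.erase k, z j = P :=
          Finset.mul_prod_erase univ z (Finset.mem_univ k)
        have h4 : ((Complex.normSq (z k) : ℝ) : ℂ) * (v k * ∏ j ∈ Finset.univ.erase k, z j)
            = (((((starRingEnd ℂ) (z 0) * v 0).re : ℝ) : ℂ)
                + ((((starRingEnd ℂ) (z k) * v k).im : ℝ) : ℂ) * Complex.I) * P := by
          rw [← key v hv k, ← h2, ← Complex.mul_conj (z k)]
          ring
        have h5 : ((Complex.normSq (z k) : ℝ) : ℂ) ≠ 0 := Complex.ofReal_ne_zero.mpr (hr0 k)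
        have h6 := congrArg (fun t => (((Complex.normSq (z k) : ℝ) : ℂ))⁻¹ * t) h4
        rw [inv_mul_cancel_left₀ h5] at h6
        rw [h6]; ring
      rw [Finset.sum_congr rfl (fun k _ => hterm k)]
      rw [hS]
      simp only [Complex.ofReal_sum, Complex.ofReal_mul, Complex.ofReal_inv,
        Finset.mul_sum, Finset.sum_mul, mul_add, add_mul, ← Finset.sum_add_distrib]
      exact Finset.sum_congr rfl (fun k _ => by ring)
    -- the linearized defining condition
    have hcond : ∀ v : Fin n → ℂ, hlTangent z v →
        (if Even n then
          P.re * (((starRingEnd ℂ) (z 0) * v 0).re * S)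
            - P.im * (∑ k, ((starRingEnd ℂ) (z k) * v k).im * (Complex.normSq (z k))⁻¹)
        else
          P.im * (((starRingEnd ℂ) (z 0) * v 0).re * S)
            + P.re * (∑ k, ((starRingEnd ℂ) (z k) * v k).im * (Complex.normSq (z k))⁻¹)) = 0 := by
      intro v hv
      have h := hv.2
      rw [hsum v hv] at h
      rcases Nat.even_or_odd n with he | ho
      · rw [if_pos he] at h ⊢
        rw [← h]
        simp [Complex.mul_re]
      · rw [if_neg (by simpa using Nat.not_even_iff_odd.mpr ho)] at h ⊢
        rw [← h]
        simp only [Complex.mul_im, Complex.add_re, Complex.add_im, Complex.ofReal_re,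
          Complex.ofReal_im, Complex.mul_re, Complex.I_re, Complex.I_im]
        ring
    constructor
    · -- Lagrangian condition
      intro u v hu hv
      have hterm : ∀ j : Fin n, ((starRingEnd ℂ) (u j) * v j).im
          = (((starRingEnd ℂ) (z 0) * u 0).re * (((starRingEnd ℂ) (z j) * v j).im * (Complex.normSq (z j))⁻¹)
            - ((starRingEnd ℂ) (z 0) * v 0).re * (((starRingEnd ℂ) (z j) * u j).im * (Complex.normSq (z j))⁻¹)) := by
        intro j
        have h1 : ((Complex.normSq (z j) : ℝ) : ℂ) * ((starRingEnd ℂ) (u j) * v j)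
            = (starRingEnd ℂ) ((starRingEnd ℂ) (z j) * u j) * ((starRingEnd ℂ) (z j) * v j) := by
          rw [_root_.map_mul, Complex.conj_conj, ← Complex.mul_conj (z j)]
          ring
        rw [key u hu j, key v hv j] at h1
        have h2 := congrArg Complex.im h1
        rw [Complex.im_ofReal_mul] at h2
        simp only [_root_.map_add, _root_.map_mul, Complex.conj_ofReal, Complex.conj_I] at h2
        have h3 : Complex.normSq (z j) * ((starRingEnd ℂ) (u j) * v j).im
            = ((starRingEnd ℂ) (z 0) * u 0).re * ((starRingEnd ℂ) (z j) * v j).im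
              - ((starRingEnd ℂ) (z 0) * v 0).re * ((starRingEnd ℂ) (z j) * u j).im := by
          rw [h2]
          simp only [Complex.add_im, Complex.mul_im, Complex.add_re, Complex.mul_re,
            Complex.ofReal_re, Complex.ofReal_im, Complex.I_re, Complex.I_im,
            Complex.neg_im, Complex.neg_re]
          ring
        have h5 : Complex.normSq (z j) ≠ 0 := hr0 j
        have h4 := congrArg (fun t => (Complex.normSq (z j))⁻¹ * t) h3
        rw [inv_mul_cancel_left₀ h5] at h4
        rw [h4]; ring
      have homega : flatKaehlerForm u v
          = ((starRingEnd ℂ) (z 0) * u 0).re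
              * (∑ k, ((starRingEnd ℂ) (z k) * v k).im * (Complex.normSq (z k))⁻¹)
            - ((starRingEnd ℂ) (z 0) * v 0).re
              * (∑ k, ((starRingEnd ℂ) (z k) * u k).im * (Complex.normSq (z k))⁻¹) := by
        rw [flatKaehlerForm, Finset.sum_congr rfl (fun j _ => hterm j)]
        rw [Finset.sum_sub_distrib, Finset.mul_sum, Finset.mul_sum]
      set au := ((starRingEnd ℂ) (z 0) * u 0).re
      set av := ((starRingEnd ℂ) (z 0) * v 0).re
      set Bu := ∑ k, ((starRingEnd ℂ) (z k) * u k).im * (Complex.normSq (z k))⁻¹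
      set Bv := ∑ k, ((starRingEnd ℂ) (z k) * v k).im * (Complex.normSq (z k))⁻¹
      have hPne : P.re ≠ 0 ∨ P.im ≠ 0 := by
        by_contra hcon
        push_neg at hcon
        exact hP (Complex.ext (by simp [hcon.1]) (by simp [hcon.2]))
      rw [homega]
      have hcu := hcond u hu
      have hcv := hcond v hv
      rcases Nat.even_or_odd n with he | ho
      · rw [if_pos he] at hcu hcv
        by_cases hp : P.re = 0
        · have hq : P.im ≠ 0 := hPne.resolve_left (by simpa using hp)
          rw [hp] at hcu hcv
          have h6 : Bu = 0 := by
            have h9 : P.im * Bu = 0 := by linarith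
            exact (mul_eq_zero.mp h9).resolve_left hq
          have h7 : Bv = 0 := by
            have h9 : P.im * Bv = 0 := by linarith
            exact (mul_eq_zero.mp h9).resolve_left hq
          rw [h6, h7]; ring
        · have h8 : P.re * S * (au * Bv - av * Bu) = 0 := by
            linear_combination Bv * hcu - Bu * hcv
          rcases mul_eq_zero.mp h8 with h9 | h9
          · exact absurd h9 (mul_ne_zero hp hSpos.ne')
          · linarith
      · rw [if_neg (by simpa using Nat.not_even_iff_odd.mpr ho)] at hcu hcv
        by_cases hq : P.im = 0
        · have hp : P.re ≠ 0 := hPne.resolve_right (by simpa using hq)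
          rw [hq] at hcu hcv
          have h6 : Bu = 0 := by
            have h9 : P.re * Bu = 0 := by linarith
            exact (mul_eq_zero.mp h9).resolve_left hp
          have h7 : Bv = 0 := by
            have h9 : P.re * Bv = 0 := by linarith
            exact (mul_eq_zero.mp h9).resolve_left hp
          rw [h6, h7]; ring
        · have h8 : P.im * S * (au * Bv - av * Bu) = 0 := by
            linear_combination Bv * hcu - Bu * hcv
          rcases mul_eq_zero.mp h8 with h9 | h9
          · exact absurd h9 (mul_ne_zero hq hSpos.ne')
          · linarith
    · -- special condition
      intro V hV
      set W : Fin n → Fin (n+1) → ℝ := fun i =>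
        Fin.cons (((starRingEnd ℂ) (z 0) * V i 0).re)
          (fun j => ((starRingEnd ℂ) (z j) * V i j).im) with hW
      set X := (Matrix.of (Fin.cons (Fin.cons 1 fun _ => 0) W)).det with hX
      set Y := (Matrix.of (Fin.cons (Fin.cons 0 fun _ => 1) W)).det with hY
      have hMeq : Matrix.of (fun i j => V i j)
            * Matrix.diagonal (fun j => (starRingEnd ℂ) (z j))
          = Matrix.of fun (i j : Fin n) => ((W i 0 : ℝ) : ℂ) + Complex.I * W i j.succ := by
        ext i j
        rw [Matrix.mul_diagonal]
        simp only [Matrix.of_apply, hW, Fin.cons_zero, Fin.cons_succ]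
        conv_lhs => rw [mul_comm, key (V i) (hV i) j]
        ring
      have hdet1 : stdHolVolumeForm V * (starRingEnd ℂ) P
          = Complex.I ^ n * ((X : ℂ) + Complex.I * (Y : ℂ)) := by
        have h1 := congrArg Matrix.det hMeq
        rw [Matrix.det_mul, Matrix.det_diagonal, lemC W] at h1
        rw [stdHolVolumeForm, hPdef, map_prod]
        exact h1
      have hnsq : Complex.normSq P ≠ 0 := (Complex.normSq_pos.mpr hP).ne'
      have h5 : ((Complex.normSq P : ℝ) : ℂ) * stdHolVolumeForm V
          = P * (Complex.I ^ n * ((X : ℂ) + Complex.I * Y)) := by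
        rw [← hdet1, ← Complex.mul_conj P]
        ring
      have h6 := congrArg Complex.im h5
      rw [Complex.im_ofReal_mul] at h6
      have hupd : ∀ ρ : Fin (n+1) → ℝ, Matrix.of (Fin.cons ρ W)
          = (Matrix.of (Fin.cons 0 W)).updateRow 0 ρ := by
        intro ρ; ext i j
        refine Fin.cases ?_ ?_ i
        · rw [Matrix.updateRow_self]; simp
        · intro i'; rw [Matrix.updateRow_ne (Fin.succ_ne_zero i')]; simp
      rcases Nat.even_or_odd n with he | ho
      · have hXY : P.im * X + P.re * Y = 0 := by
          have hzero : (Matrix.of (Fin.cons (Fin.cons P.im fun _ => P.re) W)).det = 0 := by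
            apply detzero _ (Fin.cons (P.re * S) (fun k => -P.im * (Complex.normSq (z k))⁻¹))
            · intro h0
              have h01 := congrFun h0 0
              have h02 := congrFun h0 (Fin.succ 0)
              simp only [Fin.cons_zero, Fin.cons_succ, Pi.zero_apply] at h01 h02
              have hp0 : P.re = 0 := by
                rcases mul_eq_zero.mp h01 with h | h
                · exact h
                · exact absurd h hSpos.ne'
              have hq0 : P.im = 0 := by
                rcases mul_eq_zero.mp h02 with h | h
                · linarith
                · exact absurd h (inv_ne_zero (hr0 0))
              exact hP (Complex.ext (by simpa using hp0) (by simpa using hq0))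
            · intro i
              refine Fin.cases ?_ ?_ i
              · rw [Fin.sum_univ_succ]
                simp only [Matrix.of_apply, Fin.cons_zero, Fin.cons_succ]
                have e1 : ∑ k : Fin n, P.re * (-P.im * (Complex.normSq (z k))⁻¹)
                    = -(P.re * P.im) * S := by
                  rw [hS, Finset.mul_sum]
                  exact Finset.sum_congr rfl (fun k _ => by ring)
                rw [e1]; ring
              · intro i
                rw [Fin.sum_univ_succ]
                simp only [Matrix.of_apply, hW, Fin.cons_zero, Fin.cons_succ]
                have hc := hcond (V i) (hV i)
                rw [if_pos he] at hc
                have e2 : ∑ k : Fin n, ((starRingEnd ℂ) (z k) * V i k).im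
                      * (-P.im * (Complex.normSq (z k))⁻¹)
                    = -P.im * ∑ k : Fin n, ((starRingEnd ℂ) (z k) * V i k).im
                      * (Complex.normSq (z k))⁻¹ := by
                  rw [Finset.mul_sum]
                  exact Finset.sum_congr rfl (fun k _ => by ring)
                rw [e2]; linarith
          have hdecomp : (Fin.cons P.im (fun _ => P.re) : Fin (n+1) → ℝ)
              = P.im • (Fin.cons 1 (fun _ => 0) : Fin (n+1) → ℝ) + P.re • (Fin.cons 0 (fun _ => 1) : Fin (n+1) → ℝ) := by
            funext j; refine Fin.cases ?_ ?_ j <;> simp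
          rw [hupd, hdecomp, Matrix.det_updateRow_add, Matrix.det_updateRow_smul,
            Matrix.det_updateRow_smul, ← hupd, ← hupd] at hzero
          rw [hX, hY]; linarith
        rw [Ipow_even he] at h6
        have h7 : (P * ((((-1:ℝ)^(n/2) : ℝ) : ℂ) * ((X:ℂ) + Complex.I * Y))).im
            = (-1:ℝ)^(n/2) * (P.im * X + P.re * Y) := by
          simp only [Complex.mul_im, Complex.mul_re, Complex.add_re, Complex.add_im,
            Complex.ofReal_re, Complex.ofReal_im, Complex.I_re, Complex.I_im]
          ring
        rw [h7, hXY, mul_zero] at h6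
        exact (mul_eq_zero.mp h6).resolve_left hnsq
      · obtain ⟨k, hk⟩ := ho
        have hIn : Complex.I ^ n = (((-1:ℝ) ^ k : ℝ) : ℂ) * Complex.I := by
          rw [hk, pow_succ, Ipow_even (even_two_mul k)]
          norm_num
        have hXY : P.re * X - P.im * Y = 0 := by
          have hzero : (Matrix.of (Fin.cons (Fin.cons P.re fun _ => -P.im) W)).det = 0 := by
            apply detzero _ (Fin.cons (P.im * S) (fun k => P.re * (Complex.normSq (z k))⁻¹))
            · intro h0
              have h01 := congrFun h0 0
              have h02 := congrFun h0 (Fin.succ 0)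
              simp only [Fin.cons_zero, Fin.cons_succ, Pi.zero_apply] at h01 h02
              have hq0 : P.im = 0 := by
                rcases mul_eq_zero.mp h01 with h | h
                · exact h
                · exact absurd h hSpos.ne'
              have hp0 : P.re = 0 := by
                rcases mul_eq_zero.mp h02 with h | h
                · exact h
                · exact absurd h (inv_ne_zero (hr0 0))
              exact hP (Complex.ext (by simpa using hp0) (by simpa using hq0))
            · intro i
              refine Fin.cases ?_ ?_ i
              · rw [Fin.sum_univ_succ]
                simp only [Matrix.of_apply, Fin.cons_zero, Fin.cons_succ]
                have e1 : ∑ k : Fin n, -P.im * (P.re * (Complex.normSq (z k))⁻¹)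
                    = -(P.re * P.im) * S := by
                  rw [hS, Finset.mul_sum]
                  exact Finset.sum_congr rfl (fun k _ => by ring)
                rw [e1]; ring
              · intro i
                rw [Fin.sum_univ_succ]
                simp only [Matrix.of_apply, hW, Fin.cons_zero, Fin.cons_succ]
                have hc := hcond (V i) (hV i)
                rw [if_neg (by simpa using (Nat.not_even_iff_odd.mpr ⟨k, hk⟩))] at hc
                have e2 : ∑ j : Fin n, ((starRingEnd ℂ) (z j) * V i j).im
                      * (P.re * (Complex.normSq (z j))⁻¹)
                    = P.re * ∑ j : Fin n, ((starRingEnd ℂ) (z j) * V i j).im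
                      * (Complex.normSq (z j))⁻¹ := by
                  rw [Finset.mul_sum]
                  exact Finset.sum_congr rfl (fun k _ => by ring)
                rw [e2]; linarith
          have hdecomp : (Fin.cons P.re (fun _ => -P.im) : Fin (n+1) → ℝ)
              = P.re • (Fin.cons 1 (fun _ => 0) : Fin (n+1) → ℝ) + (-P.im) • (Fin.cons 0 (fun _ => 1) : Fin (n+1) → ℝ) := by
            funext j; refine Fin.cases ?_ ?_ j <;> simp
          rw [hupd, hdecomp, Matrix.det_updateRow_add, Matrix.det_updateRow_smul,
            Matrix.det_updateRow_smul, ← hupd, ← hupd] at hzero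
          rw [hX, hY]; linarith
        rw [hIn] at h6
        have h7 : (P * ((((-1:ℝ)^k : ℝ) : ℂ) * Complex.I * ((X:ℂ) + Complex.I * Y))).im
            = (-1:ℝ)^k * (P.re * X - P.im * Y) := by
          simp only [Complex.mul_im, Complex.mul_re, Complex.add_re, Complex.add_im,
            Complex.ofReal_re, Complex.ofReal_im, Complex.I_re, Complex.I_im]
          ring
        rw [h7, hXY, mul_zero] at h6
        exact (mul_eq_zero.mp h6).resolve_left hnsq
  case neg =>
    have hn : 0 < n := Nat.pos_of_ne_zero (NeZero.ne n)
    obtain ⟨m, hm⟩ : ∃ m, z m = 0 := by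
      by_contra hcon
      push_neg at hcon
      exact hall hcon
    have huniq : ∀ j, z j = 0 → j = m := by
      intro j hj
      by_contra hne
      obtain ⟨v, hv⟩ := hsmooth ⟨fun _ => 0, 1⟩
      have h0 : ∀ k : Fin n, (∏ i ∈ Finset.univ.erase k, z i) = 0 := by
        intro k
        by_cases hk : k = m
        · subst hk
          exact Finset.prod_eq_zero (Finset.mem_erase.mpr ⟨hne, Finset.mem_univ j⟩) hj
        · exact Finset.prod_eq_zero
            (Finset.mem_erase.mpr ⟨fun h => hk h.symm |>.elim, Finset.mem_univ m⟩) hm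
      have h1 := congrArg Prod.snd hv
      simp only at h1
      have h2 : (∑ k, v k * ∏ i ∈ Finset.univ.erase k, z i) = 0 :=
        Finset.sum_eq_zero (fun k _ => by rw [h0 k, mul_zero])
      rw [h2] at h1
      split_ifs at h1 <;> simp at h1
    set Q := ∏ j ∈ Finset.univ.erase m, z j with hQdef
    have hQ0 : Q ≠ 0 := Finset.prod_ne_zero_iff.mpr
      (fun j hj h => (Finset.mem_erase.mp hj).1 (huniq j h))
    have ha0 : ∀ v : Fin n → ℂ, hlTangent z v → ∀ j,
        ((starRingEnd ℂ) (z j) * v j).re = 0 := by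
      intro v hv j
      have h00 : ((starRingEnd ℂ) (z 0) * v 0).re = 0 := by
        by_cases hm0 : m = 0
        · rw [← hm0, hm]; simp
        · rw [← hv.1 m hm0, hm]; simp
      by_cases hj : j = 0
      · rw [hj]; exact h00
      · rw [hv.1 j hj]; exact h00
    have hprod : ∀ v : Fin n → ℂ,
        (∑ k, v k * ∏ j ∈ Finset.univ.erase k, z j) = v m * Q := by
      intro v
      rw [Finset.sum_eq_single m]
      · intro k _ hk
        rw [Finset.prod_eq_zero
          (Finset.mem_erase.mpr ⟨fun h => hk h.symm |>.elim, Finset.mem_univ m⟩) hm, mul_zero]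
      · intro h
        exact absurd (Finset.mem_univ m) h
    have hmcond : ∀ v : Fin n → ℂ, hlTangent z v →
        (if Even n then (v m * Q).re else (v m * Q).im) = 0 := by
      intro v hv
      have := hv.2
      rwa [hprod v] at this
    have hzne : ∀ j, j ≠ m → z j ≠ 0 := fun j hj h => hj (huniq j h)
    constructor
    · intro u v hu hv
      rw [flatKaehlerForm]
      apply Finset.sum_eq_zero
      intro j _
      by_cases hjm : j = m
      · subst hjm
        have h1 : (starRingEnd ℂ) (u j * Q) * (v j * Q)
            = ((Complex.normSq Q : ℝ) : ℂ) * ((starRingEnd ℂ) (u j) * v j) := by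
          rw [_root_.map_mul, ← Complex.mul_conj Q]
          ring
        have h2 := congrArg Complex.im h1
        rw [Complex.im_ofReal_mul] at h2
        have h3 : ((starRingEnd ℂ) (u j * Q) * (v j * Q)).im = 0 := by
          rcases Nat.even_or_odd n with he | ho
          · have hu2 := hmcond u hu
            have hv2 := hmcond v hv
            rw [if_pos he] at hu2 hv2
            rw [Complex.mul_im, Complex.conj_re, Complex.conj_im, hu2, hv2]
            ring
          · have hu2 := hmcond u hu
            have hv2 := hmcond v hv
            rw [if_neg (by simpa using Nat.not_even_iff_odd.mpr ho)] at hu2 hv2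
            rw [Complex.mul_im, Complex.conj_re, Complex.conj_im, hu2, hv2]
            ring
        rw [h3] at h2
        have h4 := mul_eq_zero.mp h2.symm
        rcases h4 with h | h
        · exact absurd h (Complex.normSq_pos.mpr hQ0).ne'
        · exact h
      · have hzj := hzne j hjm
        have h1 : (starRingEnd ℂ) ((starRingEnd ℂ) (z j) * u j) * ((starRingEnd ℂ) (z j) * v j)
            = ((Complex.normSq (z j) : ℝ) : ℂ) * ((starRingEnd ℂ) (u j) * v j) := by
          rw [_root_.map_mul, Complex.conj_conj, ← Complex.mul_conj (z j)]
          ring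
        have h2 := congrArg Complex.im h1
        rw [Complex.im_ofReal_mul] at h2
        have h3 : ((starRingEnd ℂ) ((starRingEnd ℂ) (z j) * u j)
              * ((starRingEnd ℂ) (z j) * v j)).im = 0 := by
          rw [Complex.mul_im, Complex.conj_re, Complex.conj_im, ha0 u hu j, ha0 v hv j]
          ring
        rw [h3] at h2
        rcases mul_eq_zero.mp h2.symm with h | h
        · exact absurd h (Complex.normSq_pos.mpr hzj).ne'
        · exact h
    · intro V hV
      rcases Nat.even_or_odd n with he | ho
      · -- even case
        set R : Matrix (Fin n) (Fin n) ℝ := Matrix.of fun i j =>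
          if j = m then (V i m * Q).im else ((starRingEnd ℂ) (z j) * V i j).im with hR
        set cf : Fin n → ℂ := fun j =>
          if j = m then Complex.I * Q⁻¹
          else Complex.I * z j * ((Complex.normSq (z j) : ℝ) : ℂ)⁻¹ with hcf
        have hVc : (Matrix.of fun i j => V i j)
            = Matrix.of fun i j => cf j * ((R i j : ℝ) : ℂ) := by
          ext i j
          simp only [Matrix.of_apply, hcf, hR]
          by_cases hjm : j = m
          · subst hjm
            rw [if_pos rfl, if_pos rfl]
            have hre := hmcond (V i) (hV i)
            rw [if_pos he] at hre
            have h1 : V i j * Q = Complex.I * (((V i j * Q).im : ℝ) : ℂ) := by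
              conv_lhs => rw [← Complex.re_add_im (V i j * Q)]
              rw [hre]
              push_cast
              ring
            have h2 := congrArg (fun t => t * Q⁻¹) h1
            rw [mul_assoc, mul_inv_cancel₀ hQ0, mul_one] at h2
            conv_lhs => rw [h2]
            ring
          · rw [if_neg hjm, if_neg hjm]
            have hzj := hzne j hjm
            have hnsq : ((Complex.normSq (z j) : ℝ) : ℂ) ≠ 0 :=
              Complex.ofReal_ne_zero.mpr (Complex.normSq_pos.mpr hzj).ne'
            have h1 : (starRingEnd ℂ) (z j) * V i j
                = ((((starRingEnd ℂ) (z j) * V i j).im : ℝ) : ℂ) * Complex.I := by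
              conv_lhs => rw [← Complex.re_add_im ((starRingEnd ℂ) (z j) * V i j)]
              rw [ha0 (V i) (hV i) j]
              push_cast
              ring
            have h2 : ((Complex.normSq (z j) : ℝ) : ℂ) * V i j
                = ((((starRingEnd ℂ) (z j) * V i j).im : ℝ) : ℂ) * Complex.I * z j := by
              rw [← Complex.mul_conj (z j)]
              calc z j * (starRingEnd ℂ) (z j) * V i j
                  = z j * ((starRingEnd ℂ) (z j) * V i j) := by ring
                _ = _ := by
                    conv_lhs => rw [h1]
                    ring
            have h3 := congrArg (fun t => (((Complex.normSq (z j) : ℝ) : ℂ))⁻¹ * t) h2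
            rw [inv_mul_cancel_left₀ hnsq] at h3
            conv_lhs => rw [h3]
            ring
        have hdetc : stdHolVolumeForm V = (∏ j, cf j) * ((R.det : ℝ) : ℂ) := by
          rw [stdHolVolumeForm, hVc]
          have : (Matrix.of fun i j => cf j * ((R i j : ℝ) : ℂ))
              = Matrix.of fun i j => cf j * (R.map (fun x : ℝ => (x : ℂ))) i j := rfl
          have hmapdet : (R.map (fun x : ℝ => (x : ℂ))).det = ((R.det : ℝ) : ℂ) :=
            (Complex.ofRealHom.map_det R).symm
          rw [this, Matrix.det_mul_row, hmapdet]
        have hcprod : (∏ j, cf j)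
            = Complex.I ^ n * (((∏ j ∈ Finset.univ.erase m, (Complex.normSq (z j))⁻¹ : ℝ)) : ℂ) := by
          rw [← Finset.mul_prod_erase Finset.univ cf (Finset.mem_univ m)]
          have h1 : ∏ j ∈ Finset.univ.erase m, cf j
              = ∏ j ∈ Finset.univ.erase m,
                  (Complex.I * z j * ((Complex.normSq (z j) : ℝ) : ℂ)⁻¹) :=
            Finset.prod_congr rfl (fun j hj => by
              rw [hcf]; exact if_neg (Finset.mem_erase.mp hj).1)
          rw [h1, Finset.prod_mul_distrib, Finset.prod_mul_distrib, Finset.prod_const]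
          have hcard : (Finset.univ.erase m).card = n - 1 := by
            rw [Finset.card_erase_of_mem (Finset.mem_univ m), Finset.card_univ, Fintype.card_fin]
          have hcfm : cf m = Complex.I * Q⁻¹ := by simp [hcf]
          rw [hcard, hcfm]
          have hIn : Complex.I ^ (n-1) * Complex.I = Complex.I ^ n := by
            rw [← pow_succ]; congr 1; omega
          push_cast
          calc Complex.I * Q⁻¹ * (Complex.I ^ (n-1) * Q
                * ∏ j ∈ Finset.univ.erase m, (((Complex.normSq (z j) : ℝ)) : ℂ)⁻¹)
              = (Complex.I ^ (n-1) * Complex.I) * (Q * Q⁻¹)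
                * ∏ j ∈ Finset.univ.erase m, (((Complex.normSq (z j) : ℝ)) : ℂ)⁻¹ := by ring
            _ = _ := by rw [hIn, mul_inv_cancel₀ hQ0, mul_one]
        rw [hdetc, hcprod, Ipow_even he]
        rw [← Complex.ofReal_mul, ← Complex.ofReal_mul]
        exact Complex.ofReal_im _
      · -- odd case
        set R : Matrix (Fin n) (Fin n) ℝ := Matrix.of fun i j =>
          if j = m then (V i m * Q).re else ((starRingEnd ℂ) (z j) * V i j).im with hR
        set cf : Fin n → ℂ := fun j =>
          if j = m then Q⁻¹
          else Complex.I * z j * ((Complex.normSq (z j) : ℝ) : ℂ)⁻¹ with hcf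
        have hVc : (Matrix.of fun i j => V i j)
            = Matrix.of fun i j => cf j * ((R i j : ℝ) : ℂ) := by
          ext i j
          simp only [Matrix.of_apply, hcf, hR]
          by_cases hjm : j = m
          · subst hjm
            rw [if_pos rfl, if_pos rfl]
            have hre := hmcond (V i) (hV i)
            rw [if_neg (by simpa using Nat.not_even_iff_odd.mpr ho)] at hre
            have h1 : V i j * Q = (((V i j * Q).re : ℝ) : ℂ) := by
              conv_lhs => rw [← Complex.re_add_im (V i j * Q)]
              rw [hre]
              push_cast
              ring
            have h2 := congrArg (fun t => t * Q⁻¹) h1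
            rw [mul_assoc, mul_inv_cancel₀ hQ0, mul_one] at h2
            conv_lhs => rw [h2]
            ring
          · rw [if_neg hjm, if_neg hjm]
            have hzj := hzne j hjm
            have hnsq : ((Complex.normSq (z j) : ℝ) : ℂ) ≠ 0 :=
              Complex.ofReal_ne_zero.mpr (Complex.normSq_pos.mpr hzj).ne'
            have h1 : (starRingEnd ℂ) (z j) * V i j
                = ((((starRingEnd ℂ) (z j) * V i j).im : ℝ) : ℂ) * Complex.I := by
              conv_lhs => rw [← Complex.re_add_im ((starRingEnd ℂ) (z j) * V i j)]
              rw [ha0 (V i) (hV i) j]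
              push_cast
              ring
            have h2 : ((Complex.normSq (z j) : ℝ) : ℂ) * V i j
                = ((((starRingEnd ℂ) (z j) * V i j).im : ℝ) : ℂ) * Complex.I * z j := by
              rw [← Complex.mul_conj (z j)]
              calc z j * (starRingEnd ℂ) (z j) * V i j
                  = z j * ((starRingEnd ℂ) (z j) * V i j) := by ring
                _ = _ := by
                    conv_lhs => rw [h1]
                    ring
            have h3 := congrArg (fun t => (((Complex.normSq (z j) : ℝ) : ℂ))⁻¹ * t) h2
            rw [inv_mul_cancel_left₀ hnsq] at h3
            conv_lhs => rw [h3]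
            ring
        have hdetc : stdHolVolumeForm V = (∏ j, cf j) * ((R.det : ℝ) : ℂ) := by
          rw [stdHolVolumeForm, hVc]
          have heq : (Matrix.of fun i j => cf j * ((R i j : ℝ) : ℂ))
              = Matrix.of fun i j => cf j * (R.map (fun x : ℝ => (x : ℂ))) i j := rfl
          have hmapdet : (R.map (fun x : ℝ => (x : ℂ))).det = ((R.det : ℝ) : ℂ) :=
            (Complex.ofRealHom.map_det R).symm
          rw [heq, Matrix.det_mul_row, hmapdet]
        have hcprod : (∏ j, cf j)
            = Complex.I ^ (n-1)
              * (((∏ j ∈ Finset.univ.erase m, (Complex.normSq (z j))⁻¹ : ℝ)) : ℂ) := by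
          rw [← Finset.mul_prod_erase Finset.univ cf (Finset.mem_univ m)]
          have h1 : ∏ j ∈ Finset.univ.erase m, cf j
              = ∏ j ∈ Finset.univ.erase m,
                  (Complex.I * z j * ((Complex.normSq (z j) : ℝ) : ℂ)⁻¹) :=
            Finset.prod_congr rfl (fun j hj => by
              rw [hcf]; exact if_neg (Finset.mem_erase.mp hj).1)
          rw [h1, Finset.prod_mul_distrib, Finset.prod_mul_distrib, Finset.prod_const]
          have hcard : (Finset.univ.erase m).card = n - 1 := by
            rw [Finset.card_erase_of_mem (Finset.mem_univ m), Finset.card_univ, Fintype.card_fin]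
          have hcfm : cf m = Q⁻¹ := by simp [hcf]
          rw [hcard, hcfm]
          push_cast
          calc Q⁻¹ * (Complex.I ^ (n-1) * Q
                * ∏ j ∈ Finset.univ.erase m, (((Complex.normSq (z j) : ℝ)) : ℂ)⁻¹)
              = Complex.I ^ (n-1) * (Q * Q⁻¹)
                * ∏ j ∈ Finset.univ.erase m, (((Complex.normSq (z j) : ℝ)) : ℂ)⁻¹ := by ring
            _ = _ := by rw [mul_inv_cancel₀ hQ0, mul_one]
        rw [hdetc, hcprod, Ipow_even (Nat.Odd.sub_odd ho odd_one)]
        rw [← Complex.ofReal_mul, ← Complex.ofReal_mul]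
        exact Complex.ofReal_im _
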